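/- arXiv:math/0509472 — 2 statements merged into one kernel-verified Lean document; each statement's English description precedes it below -/
import Mathlib

section
/- Let K be a field of characteristic 0 and P = K[x₁,x₂,x₃,x₄,x₅]. Define derivations Y₁ = ∂₁ + x₃∂₄, Y₂ = ∂₂ − x₁∂₃ − (x₁²/2)∂₄ + x₃∂₅ and X₃ = ∂₃ + x₁∂₄ + x₂∂₅ of P. Assign weights w₁ = w₂ = 1, w₃ = 2, w₄ = w₅ = 3 to x₁,…,x₅. If Z is a derivation of P that is weighted-homogeneous of degree −2 (i.e., Z(xⱼ) is weighted-homogeneous of degree wⱼ − 2 for each j, being 0 when wⱼ − 2 < 0) and Z preserves the distribution D (i.e., [Z,Y₁] and [Z,Y₂] lie in the P-submodule P·Y₁ + P·Y₂ of the module of derivations of P), then Z is a scalar multiple of X₃. -/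
open MvPolynomial

set_option linter.unusedSectionVars false

noncomputable section

/-- The polynomial ring `K[x₁,…,x₅]`. -/
abbrev P5 (K : Type*) [Field K] := MvPolynomial (Fin 5) K

/-- Polynomial vector fields on 5-dimensional space: derivations of `K[x₁,…,x₅]`. -/
abbrev Der5 (K : Type*) [Field K] := Derivation K (P5 K) (P5 K)

variable (K : Type*) [Field K] [CharZero K]

/-- `∂ᵢ` as a derivation (0-indexed). -/
def dd (i : Fin 5) : Der5 K := pderiv i

/-- The variable `xᵢ` (0-indexed). -/
def xx (i : Fin 5) : P5 K := X i

/-- `Y₁ = ∂₁ + x₃∂₄`. -/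
def Y1 : Der5 K := dd K 0 + xx K 2 • dd K 3

/-- `Y₂ = ∂₂ − x₁∂₃ − (x₁²/2)∂₄ + x₃∂₅`. -/
def Y2 : Der5 K :=
  dd K 1 - xx K 0 • dd K 2 - (C ((2 : K)⁻¹) * xx K 0 ^ 2) • dd K 3
    + xx K 2 • dd K 4

/-- `X₃ = ∂₃ + x₁∂₄ + x₂∂₅`. -/
def X3 : Der5 K := dd K 2 + xx K 0 • dd K 3 + xx K 1 • dd K 4

/-- The distribution `D = P·Y₁ + P·Y₂`. -/
def DistD : Submodule (P5 K) (Der5 K) :=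
  Submodule.span (P5 K) {Y1 K, Y2 K}

/-- `Z` preserves the distribution `D`. -/
def Preserves (Z : Der5 K) : Prop :=
  ⁅Z, Y1 K⁆ ∈ DistD K ∧ ⁅Z, Y2 K⁆ ∈ DistD K

/-- The weights `w₁ = w₂ = 1`, `w₃ = 2`, `w₄ = w₅ = 3`. -/
def wt : Fin 5 → ℤ := ![1, 1, 2, 3, 3]

/-- A derivation `Z` is weighted-homogeneous of degree `s` if each coefficient
`Z(xⱼ)` is weighted-homogeneous of degree `wⱼ + s` (in particular it vanishes
if `wⱼ + s < 0`). -/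
def WtHom (s : ℤ) (Z : Der5 K) : Prop :=
  ∀ j : Fin 5, IsWeightedHomogeneous wt (Z (xx K j)) (wt j + s)

/-! ### Auxiliary lemmas -/

lemma weight_wt (d : Fin 5 →₀ ℕ) :
    Finsupp.weight wt d = (d 0 : ℤ) + d 1 + 2 * d 2 + 3 * d 3 + 3 * d 4 := by
  rw [Finsupp.weight_apply, Finsupp.sum_fintype _ _ (fun i => zero_smul ℕ (wt i)),
    Fin.sum_univ_five]
  simp [wt]
  ring

lemma hom_neg {p : P5 K} {m : ℤ} (hm : m < 0) (h : IsWeightedHomogeneous wt p m) :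
    p = 0 := by
  ext d
  rw [coeff_zero]
  by_contra hc
  have hw := h hc
  rw [weight_wt] at hw
  omega

lemma hom_zero {p : P5 K} (h : IsWeightedHomogeneous wt p 0) :
    p = C (coeff 0 p) := by
  ext d
  by_cases hd : d = 0
  · subst hd; simp
  · rw [coeff_C, if_neg fun h' => hd h'.symm]
    by_contra hc
    have hw := h hc
    rw [weight_wt] at hw
    apply hd
    have h5 : d 0 = 0 ∧ d 1 = 0 ∧ d 2 = 0 ∧ d 3 = 0 ∧ d 4 = 0 := by omega
    ext i
    fin_cases i <;> simp [h5.1, h5.2.1, h5.2.2.1, h5.2.2.2.1, h5.2.2.2.2]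

lemma hom_one {p : P5 K} (h : IsWeightedHomogeneous wt p 1) :
    ∃ a b : K, p = a • X 0 + b • X 1 := by
  refine ⟨coeff (Finsupp.single 0 1) p, coeff (Finsupp.single 1 1) p, ?_⟩
  have hne : (Finsupp.single (0 : Fin 5) 1 : Fin 5 →₀ ℕ) ≠ Finsupp.single 1 1 := by
    intro hEq
    have := DFunLike.congr_fun hEq 0
    simp [Finsupp.single_apply] at this
  ext d
  rw [coeff_add, smul_eq_C_mul, smul_eq_C_mul, coeff_C_mul, coeff_C_mul, coeff_X',
    coeff_X']
  by_cases h0 : Finsupp.single (0 : Fin 5) 1 = d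
  · subst h0
    rw [if_pos rfl, if_neg fun h' => hne h'.symm]
    ring
  · by_cases h1 : Finsupp.single (1 : Fin 5) 1 = d
    · subst h1
      rw [if_pos rfl, if_neg fun h' => hne h']
      ring
    · rw [if_neg h0, if_neg h1, mul_zero, mul_zero, add_zero]
      by_contra hc
      have hw := h hc
      rw [weight_wt] at hw
      have h5 : (d 0 = 1 ∧ d 1 = 0 ∨ d 0 = 0 ∧ d 1 = 1) ∧ d 2 = 0 ∧ d 3 = 0 ∧ d 4 = 0 := by
        omega
      rcases h5.1 with ⟨ha, hb⟩ | ⟨ha, hb⟩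
      · apply h0
        ext i
        fin_cases i <;>
          simp [Finsupp.single_apply, ha, hb, h5.2.1, h5.2.2.1, h5.2.2.2]
      · apply h1
        ext i
        fin_cases i <;>
          simp [Finsupp.single_apply, ha, hb, h5.2.1, h5.2.2.1, h5.2.2.2]

@[simp] lemma Y1_X0 : Y1 K (X 0) = 1 := by simp [Y1, dd, xx, pderiv_X]
@[simp] lemma Y1_X1 : Y1 K (X 1) = 0 := by simp [Y1, dd, xx, pderiv_X]
@[simp] lemma Y1_X2 : Y1 K (X 2) = 0 := by simp [Y1, dd, xx, pderiv_X]
@[simp] lemma Y1_X3 : Y1 K (X 3) = X 2 := by simp [Y1, dd, xx, pderiv_X, smul_eq_mul]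
@[simp] lemma Y1_X4 : Y1 K (X 4) = 0 := by simp [Y1, dd, xx, pderiv_X]

@[simp] lemma Y2_X0 : Y2 K (X 0) = 0 := by simp [Y2, dd, xx, pderiv_X]
@[simp] lemma Y2_X1 : Y2 K (X 1) = 1 := by simp [Y2, dd, xx, pderiv_X]
@[simp] lemma Y2_X2 : Y2 K (X 2) = -X 0 := by simp [Y2, dd, xx, pderiv_X, smul_eq_mul]
@[simp] lemma Y2_X3 : Y2 K (X 3) = -(C ((2 : K)⁻¹) * X 0 ^ 2) := by
  simp [Y2, dd, xx, pderiv_X, smul_eq_mul]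
@[simp] lemma Y2_X4 : Y2 K (X 4) = X 2 := by simp [Y2, dd, xx, pderiv_X, smul_eq_mul]

lemma bracket_zero {W : Der5 K} (hm : W ∈ DistD K)
    (h0 : W (X 0) = 0) (h1 : W (X 1) = 0) : W = 0 := by
  rw [DistD, Submodule.mem_span_pair] at hm
  obtain ⟨f, g, hfg⟩ := hm
  have hf : f = 0 := by
    have h := congrArg (fun D : Der5 K => D (X 0)) hfg
    simpa [Derivation.add_apply, Derivation.smul_apply, smul_eq_mul, h0] using h
  have hg : g = 0 := by
    have h := congrArg (fun D : Der5 K => D (X 1)) hfg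
    simpa [Derivation.add_apply, Derivation.smul_apply, smul_eq_mul, h1, hf] using h
  rw [← hfg, hf, hg, zero_smul, zero_smul, add_zero]

/-- any derivation of weighted degree `−2` preserving the
distribution `D` is a scalar multiple of `X₃`. -/
theorem degree_neg_two_component :
    ∀ Z : Der5 K, WtHom K (-2) Z → Preserves K Z → ∃ c : K, Z = c • X3 K := by
  intro Z hW hP
  have hZ0 : Z (X 0) = 0 := by
    have := hW 0; rw [show xx K 0 = X 0 from rfl, show wt 0 + (-2) = -1 by simp [wt]] at this
    exact hom_neg K (by norm_num) this
  have hZ1 : Z (X 1) = 0 := by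
    have := hW 1; rw [show xx K 1 = X 1 from rfl, show wt 1 + (-2) = -1 by simp [wt]] at this
    exact hom_neg K (by norm_num) this
  obtain ⟨c, hZ2⟩ : ∃ c : K, Z (X 2) = C c := by
    have := hW 2; rw [show xx K 2 = X 2 from rfl, show wt 2 + (-2) = 0 by simp [wt]] at this
    exact ⟨_, hom_zero K this⟩
  obtain ⟨a, b, hZ3⟩ : ∃ a b : K, Z (X 3) = a • X 0 + b • X 1 := by
    have := hW 3; rw [show xx K 3 = X 3 from rfl, show wt 3 + (-2) = 1 by simp [wt]] at this
    exact hom_one K this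
  obtain ⟨a', b', hZ4⟩ : ∃ a b : K, Z (X 4) = a • X 0 + b • X 1 := by
    have := hW 4; rw [show xx K 4 = X 4 from rfl, show wt 4 + (-2) = 1 by simp [wt]] at this
    exact hom_one K this
  -- both brackets vanish
  have hB1 : ⁅Z, Y1 K⁆ = 0 := by
    refine bracket_zero K hP.1 ?_ ?_ <;>
      simp [Derivation.commutator_apply, hZ0, hZ1]
  have hB2 : ⁅Z, Y2 K⁆ = 0 := by
    refine bracket_zero K hP.2 ?_ ?_ <;>
      simp [Derivation.commutator_apply, hZ0, hZ1]
  -- evaluate the brackets on x₃ and x₄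
  have e1 : Z (X 2) = Y1 K (Z (X 3)) := by
    have h := congrArg (fun D : Der5 K => D (X 3)) hB1
    simp only [Derivation.commutator_apply, Derivation.zero_apply, Y1_X3] at h
    linear_combination h
  have e3 : Y2 K (Z (X 3)) = 0 := by
    have h := congrArg (fun D : Der5 K => D (X 3)) hB2
    simp only [Derivation.commutator_apply, Derivation.zero_apply, Y2_X3] at h
    have hz : Z (C ((2 : K)⁻¹) * X 0 ^ 2) = 0 := by
      rw [← smul_eq_C_mul, Derivation.map_smul]
      simp [pow_two, Derivation.leibniz, hZ0]
    rw [map_neg, hz] at h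
    linear_combination -h
  have e2 : Y1 K (Z (X 4)) = 0 := by
    have h := congrArg (fun D : Der5 K => D (X 4)) hB1
    simpa [Derivation.commutator_apply] using h
  have e4 : Z (X 2) = Y2 K (Z (X 4)) := by
    have h := congrArg (fun D : Der5 K => D (X 4)) hB2
    simp only [Derivation.commutator_apply, Derivation.zero_apply, Y2_X4] at h
    linear_combination h
  -- identify the coefficients
  have hv3 : Y1 K (Z (X 3)) = C a := by
    rw [hZ3, map_add, Derivation.map_smul, Derivation.map_smul, Y1_X0, Y1_X1, smul_zero, add_zero,
      smul_eq_C_mul, mul_one]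
  have hv3' : Y2 K (Z (X 3)) = C b := by
    rw [hZ3, map_add, Derivation.map_smul, Derivation.map_smul, Y2_X0, Y2_X1, smul_zero, zero_add,
      smul_eq_C_mul, mul_one]
  have hv4 : Y1 K (Z (X 4)) = C a' := by
    rw [hZ4, map_add, Derivation.map_smul, Derivation.map_smul, Y1_X0, Y1_X1, smul_zero, add_zero,
      smul_eq_C_mul, mul_one]
  have hv4' : Y2 K (Z (X 4)) = C b' := by
    rw [hZ4, map_add, Derivation.map_smul, Derivation.map_smul, Y2_X0, Y2_X1, smul_zero, zero_add,
      smul_eq_C_mul, mul_one]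
  have hac : a = c := C_injective _ K (by rw [← hv3, ← e1, hZ2])
  have hb0 : b = 0 := C_injective _ K (by rw [← hv3', e3, C_0])
  have ha0 : a' = 0 := C_injective _ K (by rw [← hv4, e2, C_0])
  have hbc : b' = c := C_injective _ K (by rw [← hv4', ← e4, hZ2])
  refine ⟨c, derivation_ext fun i => ?_⟩
  fin_cases i <;>
    simp [Derivation.smul_apply, X3, dd, xx, hZ0, hZ1, hZ2, hZ3, hZ4, hac, hb0, ha0, hbc,
      pderiv_X, smul_eq_C_mul]

end
end

section
/- Let K be a field of characteristic 0, n ≥ 2, and P = K[x₁,…,xₙ]. Let D be a derivation of P with coefficients f^k = D(x_k). Suppose the f^k satisfy the system of second-order differential equations: ∂ᵢ∂ⱼ(f^k) = 0 for all i, j, k with i ≠ k and j ≠ k; and (1/2)∂_k∂_k(f^k) = ∂ᵢ∂_k(f^i) for all i ≠ k. Then there exist scalars a_k, b_{kj}, c_j ∈ K such that f^k = a_k + Σⱼ b_{kj} xⱼ + x_k·(Σⱼ cⱼ xⱼ) for every k. Conversely, every derivation with coefficients of this form satisfies the system. Hence the solution space of the system is the (n² + 2n)-dimensional subalgebra of polynomial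 vector fields spanned by ∂ᵢ, xⁱ∂ⱼ, and xⁱE (where E = Σⱼ xⱼ∂ⱼ), i.e., the standard realization of sl(n+1) by vector fields on n-dimensional space. -/
/-!
Put `cₖ = ½ ∂ₖ∂ₖ fᵏ`. The system says exactly that `fᵏ` and `xₖ ∑ⱼ cⱼ xⱼ` have the same second
partial derivatives, provided the `cₖ` are constants. They are: for `j ≠ k`, commuting partials
turns the second equation into `∂ⱼ cₖ = 2 ∂ₖ cⱼ` and `∂ₖ cⱼ = 2 ∂ⱼ cₖ`, so `3 ∂ⱼ cₖ = 0`; and for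
any `i ≠ k`, `∂ₖ cₖ = ∂ₖ∂ᵢ∂ₖ fⁱ = ∂ᵢ(∂ₖ∂ₖ fⁱ) = 0` by the first equation. A polynomial whose
second partial derivatives vanish is affine, which produces the `aₖ` and `bₖⱼ`.
-/

open MvPolynomial

noncomputable section

namespace MvPolynomial

variable {σ R : Type*} [CommRing R]

theorem pderiv_pderiv_X (i j k : σ) : pderiv i (pderiv j (X k : MvPolynomial σ R)) = 0 := by
  rcases eq_or_ne k j with rfl | h
  · rw [pderiv_X_self, pderiv_one]
  · rw [pderiv_X_of_ne h, map_zero]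

theorem pderiv_comm (i j : σ) (p : MvPolynomial σ R) :
    pderiv i (pderiv j p) = pderiv j (pderiv i p) := by
  have : ⁅pderiv i, pderiv j⁆ = (0 : Derivation R (MvPolynomial σ R) (MvPolynomial σ R)) :=
    derivation_ext fun k => by
      rw [Derivation.commutator_apply, pderiv_pderiv_X, pderiv_pderiv_X, sub_zero]; rfl
  rw [← sub_eq_zero, ← Derivation.commutator_apply, this, Derivation.zero_apply]

theorem eq_C_of_pderiv_eq_zero [IsAddTorsionFree R] {p : MvPolynomial σ R}
    (h : ∀ i, pderiv i p = 0) : p = C (coeff 0 p) := by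
  classical
  ext m
  rcases eq_or_ne m 0 with rfl | hm
  · rw [coeff_C, if_pos rfl]
  obtain ⟨i, hi⟩ : ∃ i, m i ≠ 0 := by simpa [Finsupp.ext_iff] using hm
  have hle : Finsupp.single i 1 ≤ m := Finsupp.single_le_iff.mpr (Nat.one_le_iff_ne_zero.mpr hi)
  have hcoeff := coeff_pderiv (i := i) p (m - Finsupp.single i 1)
  rw [h i, coeff_zero, tsub_add_cancel_of_le hle, Finsupp.tsub_apply, Finsupp.single_eq_same,
    ← Nat.cast_add_one, Nat.sub_one_add_one hi, mul_comm, ← nsmul_eq_mul, eq_comm,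
    nsmul_eq_zero_iff_right hi] at hcoeff
  rw [hcoeff, coeff_C, if_neg (Ne.symm hm)]

section Fintype

variable [Fintype σ]

def linearForm (c : σ → R) : MvPolynomial σ R := ∑ j, C (c j) * X j

/-- The `k`-th coefficient of the vector field `∑ₖ aₖ ∂ₖ + ∑ₖⱼ bₖⱼ xⱼ∂ₖ + (∑ⱼ cⱼ xⱼ) E`. -/
def slRealizationCoeff (a : σ → R) (b : σ → σ → R) (c : σ → R) (k : σ) : MvPolynomial σ R :=
  C (a k) + linearForm (b k) + X k * linearForm c

theorem pderiv_linearForm (c : σ → R) (j : σ) : pderiv j (linearForm c) = C (c j) := by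
  classical simp [linearForm, pderiv_X, Pi.single_apply]

theorem eq_C_add_linearForm_of_pderiv_pderiv_eq_zero [IsAddTorsionFree R]
    {p : MvPolynomial σ R} (h : ∀ i j, pderiv i (pderiv j p) = 0) :
    p = C (coeff 0 p) + linearForm fun j => coeff 0 (pderiv j p) := by
  set ℓ : MvPolynomial σ R := linearForm fun j => coeff 0 (pderiv j p)
  have hℓ : ∀ i, pderiv i (p - ℓ) = 0 := fun i => by
    rw [map_sub, pderiv_linearForm, sub_eq_zero]
    exact eq_C_of_pderiv_eq_zero (h · i)
  have hconst : coeff 0 (p - ℓ) = coeff 0 p := by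
    simp [ℓ, linearForm, coeff_sum, coeff_C_mul]
  rw [← sub_eq_iff_eq_add, eq_C_of_pderiv_eq_zero hℓ, hconst]

theorem pderiv_pderiv_C_add_linearForm (a : R) (b : σ → R) (i j : σ) :
    pderiv i (pderiv j (C a + linearForm b)) = 0 := by
  rw [map_add, pderiv_C, zero_add, pderiv_linearForm, pderiv_C]

theorem pderiv_pderiv_X_mul_linearForm (c : σ → R) (i j k : σ) :
    pderiv i (pderiv j (X k * linearForm c))
      = pderiv j (X k) * C (c i) + pderiv i (X k) * C (c j) := by
  rw [pderiv_mul, pderiv_linearForm, map_add, pderiv_mul, pderiv_mul, pderiv_linearForm,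
    pderiv_C, pderiv_pderiv_X, mul_zero, zero_mul, zero_add, add_zero]

theorem exists_pderiv_pderiv_eq_X_mul_linearForm_iff [IsAddTorsionFree R]
    {f : σ → MvPolynomial σ R} :
    (∃ c : σ → R, ∀ i j k,
      pderiv i (pderiv j (f k)) = pderiv i (pderiv j (X k * linearForm c))) ↔
    ∃ a b c, ∀ k, f k = slRealizationCoeff a b c k := by
  constructor
  · rintro ⟨c, hc⟩
    set g : σ → MvPolynomial σ R := fun k => f k - X k * linearForm c
    have hg : ∀ k i j, pderiv i (pderiv j (g k)) = 0 := fun k i j => by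
      rw [map_sub, map_sub, hc, sub_self]
    refine ⟨fun k => coeff 0 (g k), fun k j => coeff 0 (pderiv j (g k)), c, fun k => ?_⟩
    rw [slRealizationCoeff, ← eq_C_add_linearForm_of_pderiv_pderiv_eq_zero (hg k), sub_add_cancel]
  · rintro ⟨a, b, c, hf⟩
    refine ⟨c, fun i j k => ?_⟩
    rw [hf k, slRealizationCoeff, map_add, map_add, pderiv_pderiv_C_add_linearForm, zero_add]

end Fintype

end MvPolynomial

variable {σ K : Type*} [Field K]

def SolvesSlSystem (f : σ → MvPolynomial σ K) : Prop :=
  (∀ i j k, i ≠ k → j ≠ k → pderiv i (pderiv j (f k)) = 0) ∧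
    ∀ i k, i ≠ k → C (2 : K)⁻¹ * pderiv k (pderiv k (f k)) = pderiv i (pderiv k (f i))

variable [CharZero K]

variable (σ K) in
theorem two_mul_C_inv_two : (2 : MvPolynomial σ K) * C 2⁻¹ = 1 := by
  rw [← map_ofNat C 2, ← C_mul, mul_inv_cancel₀ two_ne_zero, C_1]

namespace SolvesSlSystem

variable {f : σ → MvPolynomial σ K}

theorem pderiv_half_pderiv_pderiv_self_eq_zero [Nontrivial σ] (h : SolvesSlSystem f) (j k : σ) :
    pderiv j (C (2 : K)⁻¹ * pderiv k (pderiv k (f k))) = 0 := by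
  obtain ⟨hoff, hdiag⟩ := h
  set s : σ → MvPolynomial σ K := fun k => C (2 : K)⁻¹ * pderiv k (pderiv k (f k))
  have hs : ∀ i k, i ≠ k → s k = pderiv i (pderiv k (f i)) := hdiag
  change pderiv j (s k) = 0
  rcases eq_or_ne j k with rfl | hjk
  · obtain ⟨i, hij⟩ := exists_ne j
    rw [hs i j hij, pderiv_comm j i, hoff j j i hij.symm hij.symm, map_zero]
  have hcross : ∀ j k, j ≠ k → pderiv j (s k) = 2 * pderiv k (s j) := fun j k hjk => by
    have htwice : pderiv j (pderiv j (f j)) = 2 * s j := by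
      rw [← mul_assoc, two_mul_C_inv_two, one_mul]
    rw [hs j k hjk, pderiv_comm j k (f j), pderiv_comm j k, htwice, ← map_ofNat C 2, pderiv_C_mul]
  have h3 : C (3 : K) * pderiv j (s k) = 0 := by
    rw [map_ofNat C 3]
    linear_combination (-1 : MvPolynomial σ K) * hcross j k hjk - 2 * hcross k j hjk.symm
  exact (mul_eq_zero.mp h3).resolve_left (C_ne_zero.mpr three_ne_zero)

theorem exists_pderiv_pderiv_eq [Fintype σ] [Nontrivial σ] (h : SolvesSlSystem f) :
    ∃ c : σ → K, ∀ i j k,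
      pderiv i (pderiv j (f k)) = pderiv i (pderiv j (X k * linearForm c)) := by
  obtain ⟨c, hc⟩ : ∃ c : σ → K, ∀ k, C (2 : K)⁻¹ * pderiv k (pderiv k (f k)) = C (c k) :=
    ⟨_, fun k => eq_C_of_pderiv_eq_zero (h.pderiv_half_pderiv_pderiv_self_eq_zero · k)⟩
  refine ⟨c, fun i j k => ?_⟩
  obtain ⟨hoff, hdiag⟩ := h
  rw [pderiv_pderiv_X_mul_linearForm]
  rcases eq_or_ne i k with rfl | hik
  · rcases eq_or_ne j i with rfl | hji
    · rw [pderiv_X_self]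
      linear_combination 2 * hc j - pderiv j (pderiv j (f j)) * two_mul_C_inv_two σ K
    · rw [← hdiag i j hji.symm, hc j, pderiv_X_self, pderiv_X_of_ne hji.symm]
      ring
  · rcases eq_or_ne j k with rfl | hjk
    · rw [pderiv_comm, ← hdiag j i hik.symm, hc i, pderiv_X_self, pderiv_X_of_ne hik.symm]
      ring
    · rw [hoff i j k hik hjk, pderiv_X_of_ne hik.symm, pderiv_X_of_ne hjk.symm]
      ring

end SolvesSlSystem

theorem solvesSlSystem_of_pderiv_pderiv_eq [Fintype σ] {f : σ → MvPolynomial σ K} (c : σ → K)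
    (h : ∀ i j k, pderiv i (pderiv j (f k)) = pderiv i (pderiv j (X k * linearForm c))) :
    SolvesSlSystem f := by
  simp only [SolvesSlSystem, h, pderiv_pderiv_X_mul_linearForm]
  refine ⟨fun i j k hik hjk => ?_, fun i k hik => ?_⟩
  · rw [pderiv_X_of_ne hik.symm, pderiv_X_of_ne hjk.symm]
    ring
  · rw [pderiv_X_self, pderiv_X_self, pderiv_X_of_ne hik]
    linear_combination C (c k) * two_mul_C_inv_two σ K

theorem solvesSlSystem_iff [Fintype σ] [Nontrivial σ] {f : σ → MvPolynomial σ K} :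
    SolvesSlSystem f ↔ ∃ a b c, ∀ k, f k = slRealizationCoeff a b c k :=
  ⟨fun h => exists_pderiv_pderiv_eq_X_mul_linearForm_iff.mp h.exists_pderiv_pderiv_eq,
    fun h => let ⟨c, hc⟩ := exists_pderiv_pderiv_eq_X_mul_linearForm_iff.mpr h
      solvesSlSystem_of_pderiv_pderiv_eq c hc⟩

end

/-- the coefficients `fᵏ = D(xₖ)` of a polynomial vector field `D`
satisfy the system `∂ᵢ∂ⱼ(fᵏ) = 0` (for `i, j ≠ k`) and
`(1/2)∂ₖ∂ₖ(fᵏ) = ∂ᵢ∂ₖ(fⁱ)` (for `i ≠ k`) iff there are scalars `aₖ, b_{kj}, cⱼ`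
with `fᵏ = aₖ + Σⱼ b_{kj} xⱼ + xₖ·(Σⱼ cⱼ xⱼ)` for every `k`; i.e., the solution
space is the `(n² + 2n)`-dimensional subalgebra spanned by `∂ᵢ`, `xⁱ∂ⱼ` and
`xⁱE` — the standard realization of `sl(n+1)` by vector fields. -/
theorem sl_realization_differential_equations
    {K : Type*} [Field K] [CharZero K] (n : ℕ) (hn : 2 ≤ n)
    (D : Derivation K (MvPolynomial (Fin n) K) (MvPolynomial (Fin n) K)) :
    ((∀ i j k : Fin n, i ≠ k → j ≠ k →
        pderiv i (pderiv j (D (X k))) = 0) ∧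
     (∀ i k : Fin n, i ≠ k →
        C ((2 : K)⁻¹) * pderiv k (pderiv k (D (X k)))
          = pderiv i (pderiv k (D (X i)))))
    ↔ ∃ (a : Fin n → K) (b : Fin n → Fin n → K) (c : Fin n → K),
        ∀ k, D (X k)
          = C (a k) + (∑ j, C (b k j) * X j) + X k * (∑ j, C (c j) * X j) := by
  have : Nontrivial (Fin n) := Fin.nontrivial_iff_two_le.mpr hn
  exact solvesSlSystem_iff (f := fun k => D (X k))
end
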